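/- arXiv:1211.2841 — 2 statements merged into one kernel-verified Lean document; each statement's English description precedes it below -/
import Mathlib

section
/- Let ψ be a weight function on the vertices ±e_i of the cross-polytope P_n, with w_i = ψ(e_i)+ψ(−e_i). If the minimum of the w_i is attained at least twice, then the regular subdivision of P_n induced by ψ introduces no edges beyond those of P_n itself; equivalently, no segment [e_i, −e_i] is an edge of the subdivision. -/
open Finset

/-- The 0/1 indicator vector `e_I ∈ ℝⁿ` of a subset `I ⊆ [n]`. -/
def eInd {n : ℕ} (I : Finset (Fin n)) : Fin n → ℝ := fun i => if i ∈ I then 1 else 0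

/-- The minimum of `f` over the finite set `s` is attained at least twice. -/
def MinTwiceOn {α : Type*} [DecidableEq α] (s : Finset α) (f : α → ℝ) : Prop :=
  ∃ a ∈ s, ∃ b ∈ s, a ≠ b ∧ f a = f b ∧ ∀ c ∈ s, f a ≤ f c

/-- The minimum of the three reals `a`, `b`, `c` is attained at least twice. -/
def ThreeMinTwice (a b c : ℝ) : Prop :=
  (a = b ∧ a ≤ c) ∨ (a = c ∧ a ≤ b) ∨ (b = c ∧ b ≤ a)

/-- `x` is a tropical Plücker vector of rank `d` on `[n]`: for every `S` of size `d-2`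
and distinct `i,j,k,l ∉ S`, the minimum of the three pairwise sums is attained twice. -/
def TropPlucker (n d : ℕ) (x : Finset (Fin n) → ℝ) : Prop :=
  ∀ (S : Finset (Fin n)) (i j k l : Fin n),
    S.card = d - 2 → i ∉ S → j ∉ S → k ∉ S → l ∉ S →
    i ≠ j → i ≠ k → i ≠ l → j ≠ k → j ≠ l → k ≠ l →
    ThreeMinTwice
      (x (S ∪ {i, j}) + x (S ∪ {k, l}))
      (x (S ∪ {i, k}) + x (S ∪ {j, l}))
      (x (S ∪ {i, l}) + x (S ∪ {j, k}))

/-- The linear functional on `ℝⁿ` with covector `a`. -/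
def lin {n : ℕ} (a : Fin n → ℝ) (z : Fin n → ℝ) : ℝ := ∑ i, a i * z i

/-- `[u,v]` is an edge of the polytope with (finite) vertex set `V`: some linear
functional attains its maximum over `V` exactly at `u` and `v`, `u ≠ v`. -/
def IsEdge {n : ℕ} (V : Set (Fin n → ℝ)) (u v : Fin n → ℝ) : Prop :=
  u ∈ V ∧ v ∈ V ∧ u ≠ v ∧
  ∃ a : Fin n → ℝ, (∀ z ∈ V, lin a z ≤ lin a u) ∧ lin a u = lin a v ∧
    ∀ z ∈ V, lin a z = lin a u → z = u ∨ z = v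

/-- `[u,v]` is a 1-cell of the regular subdivision of the polytope with vertex set `V`
induced by the weights `w`: some affine functional `z ↦ lin a z + c` is dominated by `w`
on `V` and touches `w` exactly at `u` and `v`, `u ≠ v`. -/
def IsCellEdge {n : ℕ} (V : Set (Fin n → ℝ)) (w : (Fin n → ℝ) → ℝ)
    (u v : Fin n → ℝ) : Prop :=
  u ∈ V ∧ v ∈ V ∧ u ≠ v ∧
  ∃ (a : Fin n → ℝ) (c : ℝ), (∀ z ∈ V, lin a z + c ≤ w z) ∧
    lin a u + c = w u ∧ lin a v + c = w v ∧
    ∀ z ∈ V, lin a z + c = w z → z = u ∨ z = v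

/-- The vertex set of `Δ(p,q;n)`: all indicator vectors `e_K` with `|K| ∈ {p,q}`. -/
def DeltaVerts (n p q : ℕ) : Set (Fin n → ℝ) :=
  {v | ∃ K : Finset (Fin n), (K.card = p ∨ K.card = q) ∧ v = eInd K}

/-- The vertex set of the face `Δ_{S,T}`: the vectors `e_{S∪{i}}` and `e_{T∖{i}}`
for `i ∈ T∖S`. -/
def DeltaSTVerts {n : ℕ} (S T : Finset (Fin n)) : Set (Fin n → ℝ) :=
  {v | ∃ i ∈ T \ S, v = eInd (insert i S) ∨ v = eInd (T.erase i)}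

/-- The vertex set of the cross-polytope `P_n`: `{±e_i : i ∈ [n]}`. -/
def CrossVerts (n : ℕ) : Set (Fin n → ℝ) :=
  {v | ∃ i : Fin n, v = eInd {i} ∨ v = -(eInd {i})}

/-- `M'` is a quotient of `M` (the matroids are concordant):
every flat of `M'` is a flat of `M`. -/
def MatroidQuotient {α : Type*} (M' M : Matroid α) : Prop :=
  ∀ F : Set α, M'.IsFlat F → M.IsFlat F

/-
If an affine functional `ℓ` below the weights touches them exactly at `e_i` and `-e_i`, then
`ℓ(e_j) + ℓ(-e_j) = ℓ(e_i) + ℓ(-e_i)` for every `j`, while `ℓ` stays strictly below the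
weight at `e_j` for `j ≠ i`. Hence `w_i < w_j` for all `j ≠ i`: the minimum of the `w_j` is
attained only at `i`.
-/

theorem lin_eInd_singleton {n : ℕ} (a : Fin n → ℝ) (j : Fin n) : lin a (eInd {j}) = a j := by
  simp [lin, eInd]

theorem lin_neg {n : ℕ} (a z : Fin n → ℝ) : lin a (-z) = -lin a z := by
  simp [lin, Finset.sum_neg_distrib]

theorem eInd_singleton_ne {n : ℕ} {i j : Fin n} (hji : j ≠ i) : eInd {j} ≠ eInd {i} := by
  intro h
  simpa [eInd, hji] using congrFun h j

theorem eInd_singleton_ne_neg {n : ℕ} (i j : Fin n) : eInd {j} ≠ -eInd {i} := by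
  intro h
  have := congrFun h j
  simp only [eInd, Pi.neg_apply, mem_singleton, if_true] at this
  split_ifs at this <;> norm_num at this

theorem IsCellEdge.crossVerts_diagonal_sum_lt {n : ℕ} {W : (Fin n → ℝ) → ℝ} {i j : Fin n}
    (h : IsCellEdge (CrossVerts n) W (eInd {i}) (-eInd {i})) (hji : j ≠ i) :
    W (eInd {i}) + W (-eInd {i}) < W (eInd {j}) + W (-eInd {j}) := by
  obtain ⟨-, -, -, a, c, hdom, hu, hv, honly⟩ := h
  have hpos : ∀ k, lin a (eInd {k}) = a k := lin_eInd_singleton a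
  have hneg : ∀ k, lin a (-eInd {k}) = -a k := fun k => by rw [lin_neg, hpos]
  rw [hpos] at hu
  rw [hneg] at hv
  have hj_neg : -a j + c ≤ W (-eInd {j}) := hneg j ▸ hdom _ ⟨j, Or.inr rfl⟩
  have hj_pos : a j + c < W (eInd {j}) := by
    refine lt_of_le_of_ne (hpos j ▸ hdom _ ⟨j, Or.inl rfl⟩) fun heq => ?_
    rcases honly _ ⟨j, Or.inl rfl⟩ (by rw [hpos]; exact heq) with h | h
    · exact eInd_singleton_ne hji h
    · exact eInd_singleton_ne_neg i j h
  linarith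

theorem not_minTwiceOn_of_lt {α : Type*} [DecidableEq α] {s : Finset α} {f : α → ℝ} {i : α}
    (hi : i ∈ s) (hlt : ∀ j ∈ s, j ≠ i → f i < f j) : ¬ MinTwiceOn s f := by
  rintro ⟨a, ha, b, hb, hab, hfab, hmin⟩
  have hfi := hmin i hi
  by_cases hai : a = i
  · have := hlt b hb (hai ▸ hab.symm)
    linarith
  · have := hlt a ha hai
    linarith

theorem statement3_general (n : ℕ) (ψp ψn : Fin n → ℝ)
    (W : (Fin n → ℝ) → ℝ)
    (hWp : ∀ i : Fin n, W (eInd {i}) = ψp i)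
    (hWn : ∀ i : Fin n, W (-(eInd {i})) = ψn i)
    (hmin : MinTwiceOn Finset.univ (fun i : Fin n => ψp i + ψn i)) :
    ∀ i : Fin n, ¬ IsCellEdge (CrossVerts n) W (eInd {i}) (-(eInd {i})) := by
  intro i hcell
  refine not_minTwiceOn_of_lt (mem_univ i) (fun j _ hji => ?_) hmin
  simpa only [hWp, hWn] using hcell.crossVerts_diagonal_sum_lt hji

/-- if the minimum of the `w_i = ψ⁺_i + ψ⁻_i` is attained at least twice,
then the regular subdivision of the cross-polytope `P_n` induced by the weights has no
diagonal `[e_i, -e_i]` as an edge (introduces no new edges). -/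
theorem statement3 (n : ℕ) (hn : 2 ≤ n) (ψp ψn : Fin n → ℝ)
    (W : (Fin n → ℝ) → ℝ)
    (hWp : ∀ i : Fin n, W (eInd {i}) = ψp i)
    (hWn : ∀ i : Fin n, W (-(eInd {i})) = ψn i)
    (hmin : MinTwiceOn Finset.univ (fun i : Fin n => ψp i + ψn i)) :
    ∀ i : Fin n, ¬ IsCellEdge (CrossVerts n) W (eInd {i}) (-(eInd {i})) :=
  statement3_general n ψp ψn W hWp hWn hmin
end

section
/- Let x : C([n],p) → ℝ and y : C([n],q) → ℝ (p ≤ q), and let D be the regular subdivision of Δ(p,q;n) induced by the weights e_I ↦ x_I, e_J ↦ y_J. If x and y satisfy the tropical Plücker relations (each separately) and the tropical incidence relations (for every S⊆T, |S|=p−1, |T|=q+1, the min over i ∈ T∖S of x_{S∪{i}}+y_{T∖{i}} is attained at least twice), then D and Δ(p,q;n) have the same 1-skeleton, i.e., D introduces no edges that are not edges of Δ(p,q;n). -/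
open Finset

/-!
Let `ℓ` be the affine function supporting the cell edge `[e_A, e_B]` of `D`. Subtracting `ℓ` from
`x` and `y` preserves the Plücker and incidence relations and makes the weights nonnegative on the
vertices of `Δ(p,q;n)`, vanishing exactly at `e_A` and `e_B`; say `|A| ≤ |B|`.

For `z = x` or `y`, the Plücker relations give an exchange property by induction on `|A \ B|`:
for `i ∈ A \ B` some `j ∈ B \ A` has `z(A - i + j) ≤ z(A)`, as soon as this holds whenever
`A \ B = {i}`. If `|A| = |B|` this base case holds because `B` is a zero, and if
`|A| = p < q = |B|` it is the incidence relation at `S = A - i`, `T = B + i`. Either way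
`A - i + j` is a third zero unless `|A \ B| = 1`, resp. `A ⊆ B`. In these two cases `[e_A, e_B]`
is an edge of `Δ(p,q;n)`, exposed by a functional that is maximal on the cube face
`{A ∩ B ⊆ K ⊆ A ∪ B}` and penalises the cardinality of `K` away from `|A|`.
-/

section FinsetLemmas

variable {α : Type*} [DecidableEq α]

lemma card_inter_add_card_inter_le (S U K : Finset α) : #(K ∩ S) + #(K ∩ U) ≤ #S + #K :=
  add_le_add (card_le_card inter_subset_right) (card_le_card inter_subset_left)

lemma subset_and_subset_of_card_inter_add_card_inter_eq {S U K : Finset α}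
    (h : #(K ∩ S) + #(K ∩ U) = #S + #K) : S ⊆ K ∧ K ⊆ U := by
  have hS : #S ≤ #(K ∩ S) := by
    have := card_le_card (inter_subset_left (s₁ := K) (s₂ := U)); omega
  have hK : #K ≤ #(K ∩ U) := by
    have := card_le_card (inter_subset_right (s₁ := K) (s₂ := S)); omega
  exact ⟨inter_eq_right.mp (eq_of_subset_of_card_le inter_subset_right hS),
    inter_eq_left.mp (eq_of_subset_of_card_le inter_subset_left hK)⟩

lemma eq_or_eq_of_inter_subset_of_subset_union {A B K : Finset α} (h1 : #(A \ B) = 1)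
    (hAB : #A = #B) (hK : #K = #A) (hinter : A ∩ B ⊆ K) (hunion : K ⊆ A ∪ B) :
    K = A ∨ K = B := by
  have hA : #A = #(A ∩ B) + 1 := by rw [← card_sdiff_add_card_inter A B, h1, add_comm]
  obtain ⟨t, ht⟩ := card_eq_one.mp (by rw [card_sdiff_of_subset hinter]; omega :
    #(K \ (A ∩ B)) = 1)
  have hKt : K = insert t (A ∩ B) := by rw [← union_sdiff_of_subset hinter, ht, union_singleton]
  rcases mem_union.mp (hunion (hKt ▸ mem_insert_self t _)) with htA | htB
  · exact .inl (eq_of_subset_of_card_le (hKt ▸ insert_subset htA inter_subset_left) (by omega))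
  · exact .inr (eq_of_subset_of_card_le (hKt ▸ insert_subset htB inter_subset_right) (by omega))

lemma union_pair (S : Finset α) (i j : α) : S ∪ {i, j} = insert i (insert j S) := by
  rw [union_comm, insert_union, singleton_union]

lemma card_insert_erase {A : Finset α} {i j : α} (hi : i ∈ A) (hj : j ∉ A) :
    #(insert j (A.erase i)) = #A := by
  rw [card_insert_of_notMem (fun h => hj (mem_of_mem_erase h)), card_erase_add_one hi]

lemma insert_erase_eq_of_sdiff_eq_singleton {A B : Finset α} {i j : α}
    (hA : A \ B = {i}) (hB : B \ A = {j}) : insert j (A.erase i) = B := by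
  rw [erase_eq, ← hA, sdiff_sdiff_self_left, insert_eq, ← hB, inter_comm, sdiff_union_inter]

end FinsetLemmas

variable {n p q : ℕ}

section Edges

lemma eInd_injective : Function.Injective (eInd (n := n)) := by
  intro K L h
  ext t
  have := congrFun h t
  simp only [eInd] at this
  split_ifs at this <;> simp_all

lemma lin_eInd (a : Fin n → ℝ) (K : Finset (Fin n)) : lin a (eInd K) = ∑ t ∈ K, a t := by
  simp [lin, eInd, sum_ite_mem]

/-- Up to the term `-c * |K|`, `lin (faceCovector S U c) (e_K)` is maximal exactly on the cube
face `S ⊆ K ⊆ U`. -/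
def faceCovector (S U : Finset (Fin n)) (c : ℝ) : Fin n → ℝ := fun t => eInd S t + eInd U t - c

lemma lin_faceCovector_eInd (S U K : Finset (Fin n)) (c : ℝ) :
    lin (faceCovector S U c) (eInd K) = #(K ∩ S) + #(K ∩ U) - c * #K := by
  simp [faceCovector, lin_eInd, eInd, sum_add_distrib, mul_comm]

lemma lin_faceCovector_le {S U A K : Finset (Fin n)} (hSA : S ⊆ A) (hAU : A ⊆ U) {c : ℝ}
    (hc : (1 - c) * (#K - #A) ≤ 0) :
    lin (faceCovector S U c) (eInd K) ≤ lin (faceCovector S U c) (eInd A) ∧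
      (lin (faceCovector S U c) (eInd K) = lin (faceCovector S U c) (eInd A) ↔
        S ⊆ K ∧ K ⊆ U ∧ (1 - c) * (#K - #A) = 0) := by
  have hdiff : lin (faceCovector S U c) (eInd K) - lin (faceCovector S U c) (eInd A)
      = (#(K ∩ S) + #(K ∩ U) - (#S + #K) : ℝ) + (1 - c) * (#K - #A) := by
    rw [lin_faceCovector_eInd, lin_faceCovector_eInd, inter_eq_right.mpr hSA,
      inter_eq_left.mpr hAU]
    ring
  have hle : (#(K ∩ S) + #(K ∩ U) : ℝ) ≤ #S + #K := by
    exact_mod_cast card_inter_add_card_inter_le S U K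
  refine ⟨by linarith, fun h => ?_, fun ⟨hSK, hKU, h0⟩ => ?_⟩
  · have heq : #(K ∩ S) + #(K ∩ U) = #S + #K := by
      exact_mod_cast (by linarith : (#(K ∩ S) + #(K ∩ U) : ℝ) = #S + #K)
    obtain ⟨hSK, hKU⟩ := subset_and_subset_of_card_inter_add_card_inter_eq heq
    exact ⟨hSK, hKU, by linarith⟩
  · rw [inter_eq_right.mpr hSK, inter_eq_left.mpr hKU, h0] at hdiff
    linarith

lemma IsEdge.symm {V : Set (Fin n → ℝ)} {u v : Fin n → ℝ} (h : IsEdge V u v) : IsEdge V v u := by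
  obtain ⟨hu, hv, huv, a, hle, heq, honly⟩ := h
  exact ⟨hv, hu, huv.symm, a, heq ▸ hle, heq.symm, fun z hz hz' => (honly z hz (heq ▸ hz')).symm⟩

lemma isEdge_deltaVerts_of_max {A B : Finset (Fin n)} (hA : #A = p ∨ #A = q)
    (hB : #B = p ∨ #B = q) (hAB : A ≠ B) (a : Fin n → ℝ) (hBA : lin a (eInd B) = lin a (eInd A))
    (hmax : ∀ K : Finset (Fin n), (#K = p ∨ #K = q) → lin a (eInd K) ≤ lin a (eInd A))
    (honly : ∀ K : Finset (Fin n), (#K = p ∨ #K = q) → lin a (eInd K) = lin a (eInd A) →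
      K = A ∨ K = B) :
    IsEdge (DeltaVerts n p q) (eInd A) (eInd B) := by
  refine ⟨⟨A, hA, rfl⟩, ⟨B, hB, rfl⟩, eInd_injective.ne hAB, a, ?_, hBA.symm, ?_⟩
  · rintro _ ⟨K, hK, rfl⟩
    exact hmax K hK
  · rintro _ ⟨K, hK, rfl⟩ h
    exact (honly K hK h).imp (congrArg eInd) (congrArg eInd)

lemma isEdge_of_subset (hpq : p < q) {A B : Finset (Fin n)} (hA : #A = p) (hB : #B = q)
    (hAB : A ⊆ B) : IsEdge (DeltaVerts n p q) (eInd A) (eInd B) := by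
  have hface (K : Finset (Fin n)) := lin_faceCovector_le (K := K) subset_rfl hAB (c := 1) (by simp)
  refine isEdge_deltaVerts_of_max (.inl hA) (.inr hB) (by rintro rfl; omega) _
    ((hface B).2.mpr ⟨hAB, subset_rfl, by simp⟩) (fun K _ => (hface K).1) (fun K hK h => ?_)
  obtain ⟨hAK, hKB, -⟩ := (hface K).2.mp h
  rcases hK with hK | hK
  · exact .inl (eq_of_subset_of_card_le hAK (by omega)).symm
  · exact .inr (eq_of_subset_of_card_le hKB (by omega))

lemma isEdge_of_card_sdiff_eq_one (hpq : p ≤ q) {A B : Finset (Fin n)} (hA : #A = p ∨ #A = q)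
    (hAB : #A = #B) (h1 : #(A \ B) = 1) : IsEdge (DeltaVerts n p q) (eInd A) (eInd B) := by
  -- the other layer of `Δ(p,q;n)` lies above `A`'s if `|A| = p` and below it if `|A| = q`
  obtain ⟨c, hc⟩ : ∃ c : ℝ, ∀ K : Finset (Fin n), (#K = p ∨ #K = q) →
      (1 - c) * (#K - #A) ≤ 0 ∧ ((1 - c) * (#K - #A) = 0 → #K = #A) := by
    rcases hA with hA | hA
    · refine ⟨2, fun K hK => ?_⟩
      have : (#A : ℝ) ≤ #K := by exact_mod_cast (by omega : #A ≤ #K)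
      exact ⟨by linarith, fun h => by exact_mod_cast (by linarith : (#K : ℝ) = #A)⟩
    · refine ⟨0, fun K hK => ?_⟩
      have : (#K : ℝ) ≤ #A := by exact_mod_cast (by omega : #K ≤ #A)
      exact ⟨by linarith, fun h => by exact_mod_cast (by linarith : (#K : ℝ) = #A)⟩
  have hB : #B = p ∨ #B = q := hAB ▸ hA
  have hface {K : Finset (Fin n)} (hK : #K = p ∨ #K = q) :=
    lin_faceCovector_le (S := A ∩ B) (U := A ∪ B) (K := K) inter_subset_left subset_union_left (hc K hK).1
  refine isEdge_deltaVerts_of_max hA hB (by rintro rfl; simp at h1) _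
    ((hface hB).2.mpr ⟨inter_subset_right, subset_union_right, by rw [hAB]; ring⟩)
    (fun K hK => (hface hK).1) (fun K hK h => ?_)
  obtain ⟨hSK, hKU, h0⟩ := (hface hK).2.mp h
  exact eq_or_eq_of_inter_subset_of_subset_union h1 hAB ((hc K hK).2 h0) hSK hKU

end Edges

section Tropical

lemma ThreeMinTwice.sub_const {a b c : ℝ} (h : ThreeMinTwice a b c) (t : ℝ) :
    ThreeMinTwice (a - t) (b - t) (c - t) := by
  simpa only [ThreeMinTwice, sub_left_inj, sub_le_sub_iff_right] using h

lemma ThreeMinTwice.min_le {a b c : ℝ} (h : ThreeMinTwice a b c) : min b c ≤ a := by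
  rcases h with ⟨h, -⟩ | ⟨h, -⟩ | ⟨-, h⟩
  · exact h ▸ min_le_left b c
  · exact h ▸ min_le_right b c
  · exact min_le_of_left_le h

lemma MinTwiceOn.congr_sub {α : Type*} [DecidableEq α] {s : Finset α} {f g : α → ℝ} {t : ℝ}
    (h : MinTwiceOn s f) (hg : ∀ i ∈ s, g i = f i - t) : MinTwiceOn s g := by
  obtain ⟨a, ha, b, hb, hab, hfab, hmin⟩ := h
  exact ⟨a, ha, b, hb, hab, by rw [hg a ha, hg b hb, hfab],
    fun c hc => by rw [hg a ha, hg c hc]; linarith [hmin c hc]⟩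

lemma MinTwiceOn.exists_ne_le {α : Type*} [DecidableEq α] {s : Finset α} {f : α → ℝ}
    (h : MinTwiceOn s f) {i : α} (hi : i ∈ s) : ∃ j ∈ s, j ≠ i ∧ f j ≤ f i := by
  obtain ⟨a, ha, b, hb, hab, hfab, hmin⟩ := h
  by_cases hai : a = i
  · exact ⟨b, hb, hai ▸ hab.symm, hfab ▸ hmin i hi⟩
  · exact ⟨a, ha, hai, hmin i hi⟩

lemma TropPlucker.sub_sum {d : ℕ} {x : Finset (Fin n) → ℝ} (hx : TropPlucker n d x)
    (a : Fin n → ℝ) (c : ℝ) : TropPlucker n d (fun K => x K - (∑ t ∈ K, a t + c)) := by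
  intro S i j k l hS hi hj hk hl hij hik hil hjk hjl hkl
  convert (hx S i j k l hS hi hj hk hl hij hik hil hjk hjl hkl).sub_const
    (a i + a j + a k + a l + 2 * (∑ t ∈ S, a t + c)) using 1 <;>
  simp only [union_pair, sum_insert, mem_insert, not_or, *, not_false_eq_true,
    and_self] <;> ring

lemma TropPlucker.min_le {d : ℕ} {x : Finset (Fin n) → ℝ} (hx : TropPlucker n d x)
    {S : Finset (Fin n)} {i j k l : Fin n} (hS : #S = d - 2) (hi : i ∉ S) (hj : j ∉ S)
    (hk : k ∉ S) (hl : l ∉ S) (hij : i ≠ j) (hik : i ≠ k) (hil : i ≠ l) (hjk : j ≠ k)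
    (hjl : j ≠ l) (hkl : k ≠ l) :
    min (x (insert i (insert k S)) + x (insert j (insert l S)))
        (x (insert i (insert l S)) + x (insert j (insert k S)))
      ≤ x (insert i (insert j S)) + x (insert k (insert l S)) := by
  simpa only [union_pair] using (hx S i j k l hS hi hj hk hl hij hik hil hjk hjl hkl).min_le

def TropIncidence (n p q : ℕ) (x y : Finset (Fin n) → ℝ) : Prop :=
  ∀ S T : Finset (Fin n), S ⊆ T → #S = p - 1 → #T = q + 1 →
    MinTwiceOn (T \ S) (fun i => x (insert i S) + y (T.erase i))

lemma TropIncidence.sub_sum {x y : Finset (Fin n) → ℝ} (hinc : TropIncidence n p q x y)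
    (a : Fin n → ℝ) (c : ℝ) :
    TropIncidence n p q (fun K => x K - (∑ t ∈ K, a t + c)) (fun K => y K - (∑ t ∈ K, a t + c)) :=
  fun S T hST hS hT => (hinc S T hST hS hT).congr_sub (t := ∑ t ∈ S, a t + ∑ t ∈ T, a t + 2 * c)
    fun i hi => by
      beta_reduce
      rw [sum_insert (mem_sdiff.mp hi).2, ← sum_erase_add _ _ (mem_sdiff.mp hi).1]
      ring

/-- The inductive step of `TropPlucker.exists_exchange_le`: the Plücker relation on `A - i0 - i`
and `i0, i, j, j0`, where `j0` is a best partner for `i0`. -/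
lemma TropPlucker.exchange_le_or_exchange_le {d : ℕ} {x : Finset (Fin n) → ℝ}
    (hx : TropPlucker n d x) {A : Finset (Fin n)} (hA : #A = d) {i i0 j j0 : Fin n} (hi : i ∈ A)
    (hi0 : i0 ∈ A) (hi0i : i0 ≠ i) (hj : j ∉ A) (hj0 : j0 ∉ A) (hjj0 : j ≠ j0)
    (hmin : x (insert j0 (A.erase i0)) ≤ x (insert j (A.erase i0)))
    (hle : x (insert j ((insert j0 (A.erase i0)).erase i)) ≤ x (insert j0 (A.erase i0))) :
    x (insert j (A.erase i)) ≤ x A ∨ x (insert j0 (A.erase i)) ≤ x A := by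
  set S := (A.erase i0).erase i with hS
  have hSA : S ⊆ A := (erase_subset _ _).trans (erase_subset _ _)
  have hSi : insert i S = A.erase i0 := insert_erase (mem_erase.mpr ⟨hi0i.symm, hi⟩)
  have hSi0 : insert i0 S = A.erase i := by
    rw [hS, erase_right_comm]; exact insert_erase (mem_erase.mpr ⟨hi0i, hi0⟩)
  have hcardS : #S = d - 2 := by
    rw [card_erase_of_mem (mem_erase.mpr ⟨hi0i.symm, hi⟩), card_erase_of_mem hi0, hA]
    omega
  have hP := hx.min_le (i := i0) (j := i) (k := j) (l := j0) hcardS (by simp [S]) (by simp [S])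
    (fun h => hj (hSA h)) (fun h => hj0 (hSA h)) hi0i (by grind) (by grind) (by grind)
    (by grind) hjj0
  rw [insert_comm i0 j S, insert_comm i j0 S, insert_comm i0 j0 S, insert_comm i j S, hSi,
    hSi0, insert_erase hi0] at hP
  rw [erase_insert_of_ne (by grind), ← hS] at hle
  rcases min_le_iff.mp hP with h | h
  · exact .inl (by linarith)
  · exact .inr (by linarith)

lemma TropPlucker.exists_exchange_le {d : ℕ} {x : Finset (Fin n) → ℝ} (hx : TropPlucker n d x)
    {B : Finset (Fin n)} {i : Fin n}
    (hbase : ∀ A : Finset (Fin n), #A = d → A \ B = {i} →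
      ∃ j ∈ B \ A, x (insert j (A.erase i)) ≤ x A)
    {A : Finset (Fin n)} (hA : #A = d) (hAB : #A ≤ #B) (hi : i ∈ A \ B) :
    ∃ j ∈ B \ A, x (insert j (A.erase i)) ≤ x A := by
  obtain ⟨m, hm⟩ : ∃ m, #(A \ B) = m + 1 := Nat.exists_eq_add_one.mpr (card_pos.mpr ⟨i, hi⟩)
  induction m generalizing A with
  | zero =>
    obtain ⟨a, ha⟩ := card_eq_one.mp hm
    rw [ha, mem_singleton] at hi
    exact hbase A hA (hi ▸ ha)
  | succ m ih =>
    obtain ⟨i0, hi0⟩ : ((A \ B).erase i).Nonempty := by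
      rw [← card_pos, card_erase_of_mem hi]; omega
    have hBA : (B \ A).Nonempty :=
      card_pos.mp (by have := card_sdiff_le_card_sdiff_iff.mpr hAB; omega)
    obtain ⟨j0, hj0, hmin⟩ := exists_min_image (B \ A) (fun j => x (insert j (A.erase i0))) hBA
    simp only [mem_erase, mem_sdiff] at hi hi0 hj0
    have hcardA' : #(insert j0 (A.erase i0)) = d := (card_insert_erase hi0.2.1 hj0.2).trans hA
    have hmA' : #(insert j0 (A.erase i0) \ B) = m + 1 := by
      rw [insert_sdiff_of_mem _ hj0.1, erase_sdiff_comm, card_erase_of_mem (by simp [hi0.2]), hm]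
      rfl
    obtain ⟨j, hj, hjle⟩ := ih hcardA' (hcardA' ▸ hA ▸ hAB) (by simp [hi, hi0.1.symm]) hmA'
    simp only [mem_sdiff, mem_insert, mem_erase, not_or, not_and] at hj
    have hjA : j ∈ B \ A := mem_sdiff.mpr ⟨hj.1, hj.2.2 (by rintro rfl; exact hi0.2.2 hj.1)⟩
    rcases hx.exchange_le_or_exchange_le hA hi.1 hi0.2.1 hi0.1 (mem_sdiff.mp hjA).2 hj0.2 hj.2.1
      (hmin j hjA) hjle with h | h
    · exact ⟨j, hjA, h⟩
    · exact ⟨j0, mem_sdiff.mpr hj0, h⟩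

lemma TropPlucker.exists_zero_ne {d : ℕ} {x : Finset (Fin n) → ℝ} (hx : TropPlucker n d x)
    (hx0 : ∀ K : Finset (Fin n), #K = d → 0 ≤ x K) {A B : Finset (Fin n)} (hA : #A = d)
    (hB : #B = d) (hxA : x A = 0) (hxB : x B = 0) (h2 : 2 ≤ #(A \ B)) :
    ∃ C : Finset (Fin n), #C = d ∧ x C = 0 ∧ C ≠ A ∧ C ≠ B := by
  obtain ⟨i, hi⟩ := card_pos.mp (by omega : 0 < #(A \ B))
  have hbase : ∀ A' : Finset (Fin n), #A' = d → A' \ B = {i} →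
      ∃ j ∈ B \ A', x (insert j (A'.erase i)) ≤ x A' := fun A' hA' hA'B => by
    obtain ⟨j, hj⟩ := card_eq_one.mp ((card_sdiff_comm (hA'.trans hB.symm)).symm.trans
      (by rw [hA'B, card_singleton]))
    refine ⟨j, hj ▸ mem_singleton_self j, ?_⟩
    rw [insert_erase_eq_of_sdiff_eq_singleton hA'B hj, hxB]
    exact hx0 A' hA'
  obtain ⟨j, hj, hle⟩ := hx.exists_exchange_le hbase hA (hA.trans hB.symm).le hi
  simp only [mem_sdiff] at hi hj
  have hC : #(insert j (A.erase i)) = d := (card_insert_erase hi.1 hj.2).trans hA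
  obtain ⟨i', hi'⟩ : ((A \ B).erase i).Nonempty := by
    rw [← card_pos, card_erase_of_mem (mem_sdiff.mpr hi)]; omega
  simp only [mem_erase, mem_sdiff] at hi'
  refine ⟨_, hC, by linarith [hx0 _ hC], fun h => hj.2 (h ▸ mem_insert_self j _), fun h => ?_⟩
  have : i' ∈ insert j (A.erase i) := mem_insert_of_mem (mem_erase.mpr ⟨hi'.1, hi'.2.1⟩)
  exact hi'.2.2 (h ▸ this)

lemma TropIncidence.exists_exchange_le {x y : Finset (Fin n) → ℝ}
    (hinc : TropIncidence n p q x y)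
    (hy0 : ∀ K : Finset (Fin n), #K = q → 0 ≤ y K) {A B : Finset (Fin n)} (hA : #A = p)
    (hB : #B = q) (hyB : y B = 0) {i : Fin n} (hAB : A \ B = {i}) :
    ∃ j ∈ B \ A, x (insert j (A.erase i)) ≤ x A := by
  have hi := mem_sdiff.mp (hAB ▸ mem_singleton_self i)
  have hST : A.erase i ⊆ insert i B := fun t ht => by
    by_cases htB : t ∈ B
    · exact mem_insert_of_mem htB
    · have : t ∈ A \ B := mem_sdiff.mpr ⟨mem_of_mem_erase ht, htB⟩
      rw [hAB, mem_singleton] at this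
      exact absurd this (mem_erase.mp ht).1
  obtain ⟨j, hj, hji, hle⟩ := (hinc _ _ hST (by rw [card_erase_of_mem hi.1, hA])
    (by rw [card_insert_of_notMem hi.2, hB])).exists_ne_le (i := i) (by simp)
  simp only [mem_sdiff, mem_insert, mem_erase, hji, false_or, not_and] at hj
  have hjA : j ∉ A := hj.2 hji
  rw [insert_erase hi.1, erase_insert hi.2, hyB, erase_insert_of_ne (Ne.symm hji)] at hle
  have := hy0 (insert i (B.erase j)) (by rw [card_insert_erase hj.1 hi.2, hB])
  exact ⟨j, mem_sdiff.mpr ⟨hj.1, hjA⟩, by linarith⟩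

lemma TropPlucker.exists_zero_ne_of_not_subset {x y : Finset (Fin n) → ℝ}
    (hx : TropPlucker n p x) (hinc : TropIncidence n p q x y) (hpq : p ≤ q)
    (hx0 : ∀ K : Finset (Fin n), #K = p → 0 ≤ x K) (hy0 : ∀ K : Finset (Fin n), #K = q → 0 ≤ y K)
    {A B : Finset (Fin n)} (hA : #A = p) (hB : #B = q) (hxA : x A = 0) (hyB : y B = 0)
    (hAB : ¬A ⊆ B) : ∃ C : Finset (Fin n), #C = p ∧ x C = 0 ∧ C ≠ A := by
  obtain ⟨i, hi⟩ := sdiff_nonempty.mpr hAB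
  obtain ⟨j, hj, hle⟩ := hx.exists_exchange_le
    (fun A' hA' hA'B => hinc.exists_exchange_le hy0 hA' hB hyB hA'B) hA (by omega) hi
  simp only [mem_sdiff] at hi hj
  have hC : #(insert j (A.erase i)) = p := (card_insert_erase hi.1 hj.2).trans hA
  exact ⟨_, hC, by linarith [hx0 _ hC], fun h => hj.2 (h ▸ mem_insert_self j _)⟩

end Tropical

theorem isEdge_of_nonneg_of_eq_zero_iff (hpq : p ≤ q) {x y : Finset (Fin n) → ℝ}
    (hx : TropPlucker n p x) (hy : TropPlucker n q y) (hinc : TropIncidence n p q x y)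
    {W : (Fin n → ℝ) → ℝ} (hWx : ∀ K : Finset (Fin n), #K = p → W (eInd K) = x K)
    (hWy : ∀ K : Finset (Fin n), #K = q → W (eInd K) = y K) {A B : Finset (Fin n)}
    (hA : #A = p ∨ #A = q) (hB : #B = p ∨ #B = q) (hAB : A ≠ B)
    (hW0 : ∀ K : Finset (Fin n), (#K = p ∨ #K = q) → 0 ≤ W (eInd K))
    (hWA : W (eInd A) = 0) (hWB : W (eInd B) = 0)
    (honly : ∀ K : Finset (Fin n), (#K = p ∨ #K = q) → W (eInd K) = 0 → K = A ∨ K = B) :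
    IsEdge (DeltaVerts n p q) (eInd A) (eInd B) := by
  wlog hle : #A ≤ #B generalizing A B
  · exact (this hB hA hAB.symm hWB hWA (fun K hK h => (honly K hK h).symm) (by omega)).symm
  rcases hle.eq_or_lt with hcard | hlt
  · obtain ⟨d, z, hd, hAd, hz, hWz⟩ : ∃ d z, (d = p ∨ d = q) ∧ #A = d ∧ TropPlucker n d z ∧
        ∀ K : Finset (Fin n), #K = d → W (eInd K) = z K := by
      rcases hA with h | h
      exacts [⟨p, x, .inl rfl, h, hx, hWx⟩, ⟨q, y, .inr rfl, h, hy, hWy⟩]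
    have hKd : ∀ K : Finset (Fin n), #K = d → #K = p ∨ #K = q := fun K hK => hK ▸ hd
    refine isEdge_of_card_sdiff_eq_one hpq hA hcard (le_antisymm ?_ ?_)
    · by_contra! h2
      obtain ⟨C, hC, hzC, hCA, hCB⟩ := hz.exists_zero_ne
        (fun K hK => hWz K hK ▸ hW0 K (hKd K hK)) hAd (hcard ▸ hAd)
        (hWz A hAd ▸ hWA) (hWz B (hcard ▸ hAd) ▸ hWB) h2
      rcases honly C (hKd C hC) (by rw [hWz C hC, hzC]) with h | h
      exacts [hCA h, hCB h]
    · exact card_pos.mpr (sdiff_nonempty.mpr fun h => hAB (eq_of_subset_of_card_le h hcard.ge))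
  · have hAp : #A = p := by omega
    have hBq : #B = q := by omega
    refine isEdge_of_subset (by omega) hAp hBq (by_contra fun hsub => ?_)
    obtain ⟨C, hC, hxC, hCA⟩ := hx.exists_zero_ne_of_not_subset hinc hpq
      (fun K hK => hWx K hK ▸ hW0 K (.inl hK)) (fun K hK => hWy K hK ▸ hW0 K (.inr hK)) hAp hBq
      (hWx A hAp ▸ hWA) (hWy B hBq ▸ hWB) hsub
    rcases honly C (.inl hC) (by rw [hWx C hC, hxC]) with rfl | rfl
    exacts [hCA rfl, by omega]

theorem statement12_general (n p q : ℕ) (hpq : p ≤ q)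
    (x y : Finset (Fin n) → ℝ)
    (hx : TropPlucker n p x) (hy : TropPlucker n q y)
    (hinc : ∀ S T : Finset (Fin n), S ⊆ T → S.card = p - 1 → T.card = q + 1 →
      MinTwiceOn (T \ S) (fun i => x (insert i S) + y (T.erase i)))
    (W : (Fin n → ℝ) → ℝ)
    (hWx : ∀ K : Finset (Fin n), K.card = p → W (eInd K) = x K)
    (hWy : ∀ K : Finset (Fin n), K.card = q → W (eInd K) = y K) :
    ∀ u v, IsCellEdge (DeltaVerts n p q) W u v → IsEdge (DeltaVerts n p q) u v := by
  rintro _ _ ⟨⟨A, hA, rfl⟩, ⟨B, hB, rfl⟩, hAB, a, c, hle, hWA, hWB, honly⟩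
  refine isEdge_of_nonneg_of_eq_zero_iff hpq (hx.sub_sum a c) (hy.sub_sum a c)
    (TropIncidence.sub_sum hinc a c) (W := fun z => W z - (lin a z + c))
    (fun K hK => by rw [hWx K hK, lin_eInd]) (fun K hK => by rw [hWy K hK, lin_eInd]) hA hB
    (fun h => hAB (h ▸ rfl)) (fun K hK => sub_nonneg.mpr (hle _ ⟨K, hK, rfl⟩))
    (sub_eq_zero.mpr hWA.symm) (sub_eq_zero.mpr hWB.symm) fun K hK h => ?_
  rcases honly _ ⟨K, hK, rfl⟩ (sub_eq_zero.mp h).symm with h | h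
  exacts [.inl (eInd_injective h), .inr (eInd_injective h)]

/-- if `x`, `y` satisfy the tropical Plücker relations and the tropical
incidence relations, then the regular subdivision `D` of `Δ(p,q;n)` induced by the
weights `e_I ↦ x_I`, `e_J ↦ y_J` introduces no edges that are not edges of `Δ(p,q;n)`. -/
theorem statement12 (n p q : ℕ) (hp : 1 ≤ p) (hpq : p ≤ q) (hq : q + 1 ≤ n)
    (x y : Finset (Fin n) → ℝ)
    (hx : TropPlucker n p x) (hy : TropPlucker n q y)
    (hinc : ∀ S T : Finset (Fin n), S ⊆ T → S.card = p - 1 → T.card = q + 1 →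
      MinTwiceOn (T \ S) (fun i => x (insert i S) + y (T.erase i)))
    (W : (Fin n → ℝ) → ℝ)
    (hWx : ∀ K : Finset (Fin n), K.card = p → W (eInd K) = x K)
    (hWy : ∀ K : Finset (Fin n), K.card = q → W (eInd K) = y K) :
    ∀ u v, IsCellEdge (DeltaVerts n p q) W u v → IsEdge (DeltaVerts n p q) u v :=
  statement12_general n p q hpq x y hx hy hinc W hWx hWy
end
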